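/- arXiv:1607.06310 — 2 statements merged into one kernel-verified Lean document; each statement's English description precedes it below -/
import Mathlib

section
/- Let φ, ψ : S¹ → S¹ be continuous. Then for every w in the open unit disk 𝔻, one has |ξ_φ(w) − ξ_ψ(w)| ≤ ((1 + |w|)/(1 − |w|))·‖φ − ψ‖_{S¹}. -/
/-- Arc-length distance on the unit circle: the infimum of `|x₁ − x₂|` over
representatives `ζ₁ = e^{ix₁}`, `ζ₂ = e^{ix₂}`. -/
noncomputable def dS1 (ζ₁ ζ₂ : ℂ) : ℝ :=
  sInf {d : ℝ | ∃ x₁ x₂ : ℝ, ζ₁ = Complex.exp (Complex.I * (x₁ : ℂ)) ∧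
    ζ₂ = Complex.exp (Complex.I * (x₂ : ℂ)) ∧ d = |x₁ - x₂|}

/-- The average `ξ_φ(w) = (1/2π)·∫₀^{2π} (φ(e^{ix}) − w)/(1 − w̄·φ(e^{ix})) dx`
of a circle map `φ` taken at `w` in the unit disk. -/
noncomputable def avgMap (φ : ℂ → ℂ) (w : ℂ) : ℂ :=
  (1 / (2 * Real.pi)) • ∫ x in (0 : ℝ)..(2 * Real.pi),
    (φ (Complex.exp (Complex.I * (x : ℂ))) - w) /
      (1 - (starRingEnd ℂ) w * φ (Complex.exp (Complex.I * (x : ℂ))))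

/-- `‖φ − ψ‖_{S¹} = sup_{ζ∈S¹} d_{S¹}(φ(ζ), ψ(ζ))`, the uniform arc-length
distance between two circle maps. -/
noncomputable def supDistS1 (φ ψ : ℂ → ℂ) : ℝ :=
  ⨆ ζ : {z : ℂ // ‖z‖ = 1}, dS1 (φ ζ.val) (ψ ζ.val)

/-!
The disk automorphism `M_w(z) = (z − w)/(1 − w̄z)` satisfies
`M_w(a) − M_w(b) = (a − b)(1 − |w|²)/((1 − w̄a)(1 − w̄b))`, and `|1 − w̄z| ≥ 1 − |w|` on the
closed disk, so `M_w` is `(1 + |w|)/(1 − |w|)`-Lipschitz there. Chords are shorter than arcs,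
so pointwise `|M_w(φ ζ) − M_w(ψ ζ)| ≤ (1 + |w|)/(1 − |w|) · ‖φ − ψ‖_{S¹}`, and averaging over
the circle preserves this bound.
-/

open Complex ComplexConjugate

noncomputable def mobius (w z : ℂ) : ℂ := (z - w) / (1 - conj w * z)

section Mobius

variable {w a b : ℂ}

lemma one_sub_norm_le_norm_one_sub_conj_mul (ha : ‖a‖ ≤ 1) :
    1 - ‖w‖ ≤ ‖1 - conj w * a‖ := by
  calc 1 - ‖w‖ ≤ ‖(1 : ℂ)‖ - ‖conj w * a‖ := by
        rw [norm_one, norm_mul, RCLike.norm_conj]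
        nlinarith [norm_nonneg w]
    _ ≤ ‖1 - conj w * a‖ := norm_sub_norm_le _ _

lemma one_sub_conj_mul_ne_zero (hw : ‖w‖ < 1) (ha : ‖a‖ ≤ 1) : 1 - conj w * a ≠ 0 :=
  norm_pos_iff.mp ((sub_pos.mpr hw).trans_le (one_sub_norm_le_norm_one_sub_conj_mul ha))

lemma mobius_sub_mobius (hw : ‖w‖ < 1) (ha : ‖a‖ ≤ 1) (hb : ‖b‖ ≤ 1) :
    mobius w a - mobius w b
      = (a - b) * (1 - conj w * w) / ((1 - conj w * a) * (1 - conj w * b)) := by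
  rw [mobius, mobius, div_sub_div _ _ (one_sub_conj_mul_ne_zero hw ha)
    (one_sub_conj_mul_ne_zero hw hb)]
  ring

lemma norm_mobius_sub_mobius_le (hw : ‖w‖ < 1) (ha : ‖a‖ ≤ 1) (hb : ‖b‖ ≤ 1) :
    ‖mobius w a - mobius w b‖ ≤ (1 + ‖w‖) / (1 - ‖w‖) * ‖a - b‖ := by
  have hr : 0 < 1 - ‖w‖ := sub_pos.mpr hw
  have hnum : ‖1 - conj w * w‖ = (1 + ‖w‖) * (1 - ‖w‖) := by
    rw [mul_comm, mul_conj, normSq_eq_norm_sq, ← ofReal_one, ← ofReal_sub, norm_real,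
      Real.norm_of_nonneg (by nlinarith [norm_nonneg w])]
    ring
  have hden : (1 - ‖w‖) * (1 - ‖w‖) ≤ ‖1 - conj w * a‖ * ‖1 - conj w * b‖ :=
    mul_le_mul (one_sub_norm_le_norm_one_sub_conj_mul ha)
      (one_sub_norm_le_norm_one_sub_conj_mul hb) hr.le (norm_nonneg _)
  rw [mobius_sub_mobius hw ha hb, norm_div, norm_mul, norm_mul, hnum,
    div_le_iff₀ ((mul_pos hr hr).trans_le hden)]
  calc ‖a - b‖ * ((1 + ‖w‖) * (1 - ‖w‖))
      = (1 + ‖w‖) / (1 - ‖w‖) * ‖a - b‖ * ((1 - ‖w‖) * (1 - ‖w‖)) := by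
        field_simp
    _ ≤ (1 + ‖w‖) / (1 - ‖w‖) * ‖a - b‖ * (‖1 - conj w * a‖ * ‖1 - conj w * b‖) := by
        gcongr

end Mobius

lemma norm_exp_I_mul_sub_exp_I_mul_le (x y : ℝ) :
    ‖exp (I * x) - exp (I * y)‖ ≤ |x - y| := by
  have hfactor : exp (I * x) - exp (I * y) = exp (I * y) * (exp (I * ↑(x - y)) - 1) := by
    rw [mul_sub, ← exp_add]
    push_cast
    ring_nf
  rw [hfactor, norm_mul, norm_exp_I_mul_ofReal, one_mul]
  exact Real.norm_exp_I_mul_ofReal_sub_one_le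

lemma eq_exp_I_mul_arg {a : ℂ} (ha : ‖a‖ = 1) : a = exp (I * a.arg) := by
  conv_lhs => rw [← norm_mul_exp_arg_mul_I a, ha, ofReal_one, one_mul, mul_comm]

section ArcDistance

variable {a b : ℂ}

lemma dS1_le_abs_arg_sub_arg (ha : ‖a‖ = 1) (hb : ‖b‖ = 1) : dS1 a b ≤ |a.arg - b.arg| :=
  csInf_le ⟨0, by rintro d ⟨x₁, x₂, -, -, rfl⟩; positivity⟩
    ⟨a.arg, b.arg, eq_exp_I_mul_arg ha, eq_exp_I_mul_arg hb, rfl⟩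

lemma norm_sub_le_dS1 (ha : ‖a‖ = 1) (hb : ‖b‖ = 1) : ‖a - b‖ ≤ dS1 a b := by
  refine le_csInf ⟨_, a.arg, b.arg, eq_exp_I_mul_arg ha, eq_exp_I_mul_arg hb, rfl⟩ ?_
  rintro d ⟨x₁, x₂, rfl, rfl, rfl⟩
  exact norm_exp_I_mul_sub_exp_I_mul_le x₁ x₂

lemma dS1_le_two_pi (ha : ‖a‖ = 1) (hb : ‖b‖ = 1) : dS1 a b ≤ 2 * Real.pi := by
  calc dS1 a b ≤ |a.arg - b.arg| := dS1_le_abs_arg_sub_arg ha hb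
    _ ≤ |a.arg| + |b.arg| := abs_sub _ _
    _ ≤ 2 * Real.pi := by linarith [abs_arg_le_pi a, abs_arg_le_pi b]

end ArcDistance

lemma dS1_le_supDistS1 {φ ψ : ℂ → ℂ} (hφ : ∀ ζ : ℂ, ‖ζ‖ = 1 → ‖φ ζ‖ = 1)
    (hψ : ∀ ζ : ℂ, ‖ζ‖ = 1 → ‖ψ ζ‖ = 1) {ζ : ℂ} (hζ : ‖ζ‖ = 1) :
    dS1 (φ ζ) (ψ ζ) ≤ supDistS1 φ ψ := by
  refine le_ciSup (f := fun ζ : {z : ℂ // ‖z‖ = 1} ↦ dS1 (φ ζ) (ψ ζ)) ⟨2 * Real.pi, ?_⟩ ⟨ζ, hζ⟩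
  rintro d ⟨ζ, rfl⟩
  exact dS1_le_two_pi (hφ _ ζ.prop) (hψ _ ζ.prop)

lemma avgMap_eq (φ : ℂ → ℂ) (w : ℂ) :
    avgMap φ w = (1 / (2 * Real.pi)) • ∫ x in (0 : ℝ)..(2 * Real.pi),
      mobius w (φ (exp (I * x))) := rfl

lemma continuous_mobius_comp_exp_I_mul {φ : ℂ → ℂ} {w : ℂ} (hw : ‖w‖ < 1)
    (hcont : ContinuousOn φ {z : ℂ | ‖z‖ = 1}) (hmaps : ∀ ζ : ℂ, ‖ζ‖ = 1 → ‖φ ζ‖ = 1) :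
    Continuous fun x : ℝ ↦ mobius w (φ (exp (I * x))) := by
  have hφ : Continuous fun x : ℝ ↦ φ (exp (I * x)) :=
    hcont.comp_continuous (by fun_prop) fun x ↦ norm_exp_I_mul_ofReal x
  exact (hφ.sub continuous_const).div (continuous_const.sub (continuous_const.mul hφ))
    fun x ↦ one_sub_conj_mul_ne_zero hw (hmaps _ (norm_exp_I_mul_ofReal x)).le

lemma norm_average_le {E : Type*} [NormedAddCommGroup E] [NormedSpace ℝ E] {f : ℝ → E}
    {T C : ℝ} (hT : 0 < T) (hf : ∀ x, ‖f x‖ ≤ C) :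
    ‖(1 / T) • ∫ x in (0 : ℝ)..T, f x‖ ≤ C := by
  rw [norm_smul, Real.norm_of_nonneg (by positivity)]
  calc 1 / T * ‖∫ x in (0 : ℝ)..T, f x‖ ≤ 1 / T * (C * |T - 0|) := by
        gcongr
        exact intervalIntegral.norm_integral_le_of_norm_le_const fun x _ ↦ hf x
    _ = C := by
        rw [sub_zero, abs_of_pos hT]
        field_simp

/-- For continuous `φ, ψ : S¹ → S¹` and every `w ∈ 𝔻`,
`|ξ_φ(w) − ξ_ψ(w)| ≤ ((1 + |w|)/(1 − |w|))·‖φ − ψ‖_{S¹}`. -/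
theorem stmt_9 (φ ψ : ℂ → ℂ)
    (hcontφ : ContinuousOn φ {z : ℂ | ‖z‖ = 1})
    (hcontψ : ContinuousOn ψ {z : ℂ | ‖z‖ = 1})
    (hmapsφ : ∀ ζ : ℂ, ‖ζ‖ = 1 → ‖φ ζ‖ = 1)
    (hmapsψ : ∀ ζ : ℂ, ‖ζ‖ = 1 → ‖ψ ζ‖ = 1) :
    ∀ w : ℂ, ‖w‖ < 1 →
      ‖avgMap φ w - avgMap ψ w‖ ≤
        ((1 + ‖w‖) / (1 - ‖w‖)) * supDistS1 φ ψ := by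
  intro w hw
  rw [avgMap_eq, avgMap_eq, ← smul_sub, ← intervalIntegral.integral_sub
    ((continuous_mobius_comp_exp_I_mul hw hcontφ hmapsφ).intervalIntegrable _ _)
    ((continuous_mobius_comp_exp_I_mul hw hcontψ hmapsψ).intervalIntegrable _ _)]
  refine norm_average_le Real.two_pi_pos fun x ↦ ?_
  have hζ : ‖exp (I * x)‖ = 1 := norm_exp_I_mul_ofReal x
  have hC : 0 ≤ (1 + ‖w‖) / (1 - ‖w‖) := div_nonneg (by positivity) (sub_pos.mpr hw).le
  calc ‖mobius w (φ (exp (I * x))) - mobius w (ψ (exp (I * x)))‖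
      ≤ (1 + ‖w‖) / (1 - ‖w‖) * ‖φ (exp (I * x)) - ψ (exp (I * x))‖ :=
        norm_mobius_sub_mobius_le hw (hmapsφ _ hζ).le (hmapsψ _ hζ).le
    _ ≤ (1 + ‖w‖) / (1 - ‖w‖) * dS1 (φ (exp (I * x))) (ψ (exp (I * x))) := by
        gcongr
        exact norm_sub_le_dS1 (hmapsφ _ hζ) (hmapsψ _ hζ)
    _ ≤ (1 + ‖w‖) / (1 - ‖w‖) * supDistS1 φ ψ := by
        gcongr
        exact dS1_le_supDistS1 hmapsφ hmapsψ hζ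
end

section
/- Let ε > 0 and let φ : S¹ → S¹ be continuous with d_{S¹}(φ(ζ), ζ) ≤ ε for every ζ ∈ S¹ and with ξ_φ(0) = 0. Then for every w ∈ 𝔻 with |w| ≤ 1/2, one has (1 − 56ε)·|w| ≤ |ξ_φ(w)|. -/
/-!
With `c = w̄` and `h(u) = u² / (1 - c u)`, the identity
`(u - w) / (1 - c u) = -w + (1 - |w|²) (u + c h(u))` together with the vanishing circle averages of
`φ` (the hypothesis `ξ_φ(0) = 0`) and of the holomorphic `h` (mean value property) gives
`ξ_φ(w) + w = (1 - |w|²) c ⨍ (h(φ z) - h(z))`. On the closed unit disk `h` is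
`(2 + |c|) / (1 - |c|)²`-Lipschitz, and `|φ(z) - z| ≤ ε` since a chord is shorter than its arc, so
`|ξ_φ(w) + w| ≤ (1 + |w|)(2 + |w|) / (1 - |w|) · |w| ε`, at most `15/2 · |w| ε` for `|w| ≤ 1/2`.
-/

open Complex ComplexConjugate Metric Real

lemma norm_sub_le_dS1_s12 {ζ₁ ζ₂ : ℂ} (h₁ : ‖ζ₁‖ = 1) (h₂ : ‖ζ₂‖ = 1) :
    ‖ζ₁ - ζ₂‖ ≤ dS1 ζ₁ ζ₂ := by
  have polar : ∀ {ζ : ℂ}, ‖ζ‖ = 1 → ζ = exp (I * (ζ.arg : ℂ)) := fun {ζ} h => by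
    conv_lhs => rw [← norm_mul_exp_arg_mul_I ζ, h]
    rw [ofReal_one, one_mul, mul_comm]
  refine le_csInf ⟨_, ζ₁.arg, ζ₂.arg, polar h₁, polar h₂, rfl⟩ ?_
  rintro d ⟨x₁, x₂, rfl, rfl, rfl⟩
  have : exp (I * x₁) - exp (I * x₂) = exp (I * x₂) * (exp (I * ↑(x₁ - x₂)) - 1) := by
    rw [mul_sub, ← Complex.exp_add]; push_cast; ring_nf
  rw [this, norm_mul, mul_comm I, norm_exp_ofReal_mul_I, one_mul, ← Real.norm_eq_abs]
  exact Real.norm_exp_I_mul_ofReal_sub_one_le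

lemma norm_circleAverage_le {E : Type*} [NormedAddCommGroup E] [NormedSpace ℝ E] {f : ℂ → E}
    {c : ℂ} {R C : ℝ} (hf : ∀ z ∈ sphere c |R|, ‖f z‖ ≤ C) : ‖circleAverage f c R‖ ≤ C := by
  have hint : ‖∫ θ in 0..2 * π, f (circleMap c R θ)‖ ≤ C * |2 * π - 0| :=
    intervalIntegral.norm_integral_le_of_norm_le_const fun θ _ => hf _ (circleMap_mem_sphere' c R θ)
  rw [circleAverage_def, norm_smul, norm_inv, Real.norm_eq_abs, sub_zero] at *
  calc |2 * π|⁻¹ * ‖∫ θ in 0..2 * π, f (circleMap c R θ)‖ ≤ |2 * π|⁻¹ * (C * |2 * π|) := by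
        gcongr
    _ = C := by field_simp

lemma avgMap_eq_circleAverage (φ : ℂ → ℂ) (w : ℂ) :
    avgMap φ w = circleAverage (fun z => (φ z - w) / (1 - conj w * φ z)) 0 1 := by
  simp only [avgMap, circleAverage_def, circleMap_zero, ofReal_one, one_mul, one_div, mul_comm I]

lemma circleAverage_eq_zero_of_avgMap_zero {φ : ℂ → ℂ} (h : avgMap φ 0 = 0) :
    circleAverage φ 0 1 = 0 := by
  rw [avgMap_eq_circleAverage] at h
  simpa using h

lemma one_sub_norm_le_norm_one_sub_mul {c u : ℂ} (hu : ‖u‖ ≤ 1) : 1 - ‖c‖ ≤ ‖1 - c * u‖ := by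
  have : ‖c * u‖ ≤ ‖c‖ := by
    rw [norm_mul]; exact mul_le_of_le_one_right (norm_nonneg c) hu
  have := norm_sub_norm_le (1 : ℂ) (c * u)
  rw [norm_one] at this
  linarith

lemma one_sub_mul_ne_zero {c u : ℂ} (hc : ‖c‖ < 1) (hu : ‖u‖ ≤ 1) : 1 - c * u ≠ 0 :=
  norm_pos_iff.mp (lt_of_lt_of_le (sub_pos.mpr hc) (one_sub_norm_le_norm_one_sub_mul hu))

lemma circleAverage_sq_div_one_sub_mul_eq_zero {c : ℂ} (hc : ‖c‖ < 1) :
    circleAverage (fun z => z ^ 2 / (1 - c * z)) 0 1 = 0 := by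
  have hdiff : DifferentiableOn ℂ (fun z : ℂ => z ^ 2 / (1 - c * z)) (closedBall 0 1) :=
    fun z hz => by
      refine (differentiableAt_pow 2 |>.div ?_ ?_).differentiableWithinAt
      · fun_prop
      · exact one_sub_mul_ne_zero hc (mem_closedBall_zero_iff.mp hz)
  rw [← closure_ball 0 one_ne_zero] at hdiff
  have hcl : DiffContOnCl ℂ (fun z : ℂ => z ^ 2 / (1 - c * z)) (ball 0 |1|) := by
    rw [abs_one]; exact hdiff.diffContOnCl
  simpa using hcl.circleAverage

lemma norm_sq_div_one_sub_mul_sub_le {c u v : ℂ} (hc : ‖c‖ < 1) (hu : ‖u‖ ≤ 1) (hv : ‖v‖ ≤ 1) :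
    ‖u ^ 2 / (1 - c * u) - v ^ 2 / (1 - c * v)‖ ≤ (2 + ‖c‖) / (1 - ‖c‖) ^ 2 * ‖u - v‖ := by
  have hu' := one_sub_mul_ne_zero hc hu
  have hv' := one_sub_mul_ne_zero hc hv
  have hnum : ‖u + v - c * u * v‖ ≤ 2 + ‖c‖ := by
    calc ‖u + v - c * u * v‖ ≤ ‖u‖ + ‖v‖ + ‖c‖ * ‖u‖ * ‖v‖ := by
          grw [norm_sub_le, norm_add_le, norm_mul, norm_mul]
      _ ≤ 1 + 1 + ‖c‖ * 1 * 1 := by gcongr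
      _ = 2 + ‖c‖ := by ring
  have hden : (1 - ‖c‖) ^ 2 ≤ ‖(1 - c * u) * (1 - c * v)‖ := by
    rw [norm_mul, sq]
    have := sub_pos.mpr hc
    gcongr <;> exact one_sub_norm_le_norm_one_sub_mul ‹_›
  have key : u ^ 2 / (1 - c * u) - v ^ 2 / (1 - c * v)
      = (u - v) * (u + v - c * u * v) / ((1 - c * u) * (1 - c * v)) := by
    rw [div_sub_div _ _ hu' hv']; ring
  rw [key, norm_div, norm_mul, mul_comm (_ / _), mul_div_assoc]
  gcongr

lemma div_one_sub_conj_mul_eq {u w : ℂ} (h : 1 - conj w * u ≠ 0) :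
    (u - w) / (1 - conj w * u)
      = -w + ((1 - ‖w‖ ^ 2 : ℝ) : ℂ) * (u + conj w * (u ^ 2 / (1 - conj w * u))) := by
  have h' : 1 - u * conj w ≠ 0 := by rwa [mul_comm]
  push_cast
  rw [← conj_mul']
  field_simp
  ring

theorem avgMap_add_eq {φ : ℂ → ℂ} {w : ℂ} (hw : ‖w‖ < 1) (hcont : ContinuousOn φ (sphere 0 1))
    (hmaps : ∀ ζ ∈ sphere (0 : ℂ) 1, ‖φ ζ‖ ≤ 1) (hbar : circleAverage φ 0 1 = 0) :
    avgMap φ w + w = ((1 - ‖w‖ ^ 2 : ℝ) : ℂ) * conj w *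
      circleAverage (fun z => φ z ^ 2 / (1 - conj w * φ z) - z ^ 2 / (1 - conj w * z)) 0 1 := by
  set c := conj w
  set k : ℂ := ((1 - ‖w‖ ^ 2 : ℝ) : ℂ)
  have hc : ‖c‖ < 1 := by rwa [norm_conj]
  have hφ : ContinuousOn (fun z => φ z ^ 2 / (1 - c * φ z)) (sphere 0 1) :=
    (hcont.pow 2).div (continuousOn_const.sub (continuousOn_const.mul hcont))
      fun z hz => one_sub_mul_ne_zero hc (hmaps z hz)
  have hid : ContinuousOn (fun z : ℂ => z ^ 2 / (1 - c * z)) (sphere 0 1) :=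
    (continuousOn_id.pow 2).div (continuousOn_const.sub (continuousOn_const.mul continuousOn_id))
      fun z hz => one_sub_mul_ne_zero hc (mem_sphere_zero_iff_norm.mp hz).le
  have hsplit : avgMap φ w =
      circleAverage (fun z => -w + k • (φ z + c • (φ z ^ 2 / (1 - c * φ z)))) 0 1 := by
    rw [avgMap_eq_circleAverage]
    refine circleAverage_congr_sphere fun z hz => ?_
    rw [abs_one] at hz
    exact div_one_sub_conj_mul_eq (one_sub_mul_ne_zero hc (hmaps z hz))
  have ci : ∀ f : ℂ → ℂ, ContinuousOn f (sphere 0 1) → CircleIntegrable f 0 1 :=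
    fun f hf => hf.circleIntegrable zero_le_one
  rw [hsplit, circleAverage_fun_add (circleIntegrable_const _ _ _)
      (ci (fun z => k • (φ z + c • (φ z ^ 2 / (1 - c * φ z)))) (by fun_prop)),
    circleAverage_const, circleAverage_fun_smul,
    circleAverage_fun_add (ci _ hcont) (ci (fun z => c • (φ z ^ 2 / (1 - c * φ z))) (by fun_prop)),
    circleAverage_fun_smul, hbar, circleAverage_fun_sub (ci _ hφ) (ci _ hid),
    circleAverage_sq_div_one_sub_mul_eq_zero hc]
  simp only [smul_eq_mul, sub_zero, zero_add]
  ring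

theorem norm_avgMap_add_le {φ : ℂ → ℂ} {w : ℂ} {ε : ℝ} (hw : ‖w‖ < 1)
    (hcont : ContinuousOn φ (sphere 0 1)) (hmaps : ∀ ζ ∈ sphere (0 : ℂ) 1, ‖φ ζ‖ ≤ 1)
    (hclose : ∀ ζ ∈ sphere (0 : ℂ) 1, ‖φ ζ - ζ‖ ≤ ε) (hbar : circleAverage φ 0 1 = 0) :
    ‖avgMap φ w + w‖ ≤ (1 + ‖w‖) * (2 + ‖w‖) / (1 - ‖w‖) * ‖w‖ * ε := by
  have hc : ‖conj w‖ < 1 := by rwa [norm_conj]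
  have hw' : 0 < 1 - ‖w‖ := sub_pos.mpr hw
  have havg :
      ‖circleAverage (fun z => φ z ^ 2 / (1 - conj w * φ z) - z ^ 2 / (1 - conj w * z)) 0 1‖ ≤
        (2 + ‖w‖) / (1 - ‖w‖) ^ 2 * ε := by
    refine norm_circleAverage_le fun z hz => ?_
    rw [abs_one] at hz
    have hz1 := (mem_sphere_zero_iff_norm.mp hz).le
    calc _ ≤ (2 + ‖conj w‖) / (1 - ‖conj w‖) ^ 2 * ‖φ z - z‖ :=
          norm_sq_div_one_sub_mul_sub_le hc (hmaps z hz) hz1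
      _ ≤ (2 + ‖w‖) / (1 - ‖w‖) ^ 2 * ε := by
          rw [norm_conj]
          gcongr
          exact hclose z hz
  rw [avgMap_add_eq hw hcont hmaps hbar, norm_mul, norm_mul, norm_conj, Complex.norm_real,
    Real.norm_of_nonneg (by nlinarith [norm_nonneg w])]
  calc (1 - ‖w‖ ^ 2) * ‖w‖ * ‖_‖ ≤ (1 - ‖w‖ ^ 2) * ‖w‖ * ((2 + ‖w‖) / (1 - ‖w‖) ^ 2 * ε) := by
        gcongr
        nlinarith [norm_nonneg w]
    _ = (1 + ‖w‖) * (2 + ‖w‖) / (1 - ‖w‖) * ‖w‖ * ε := by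
        field_simp
        ring

/-- If `φ : S¹ → S¹` is continuous with `d_{S¹}(φ(ζ), ζ) ≤ ε` for all
`ζ ∈ S¹` and `ξ_φ(0) = 0`, then `(1 − 56ε)·|w| ≤ |ξ_φ(w)|` for all `|w| ≤ 1/2`. -/
theorem stmt_12 (ε : ℝ) (hε : 0 < ε) (φ : ℂ → ℂ)
    (hcont : ContinuousOn φ {z : ℂ | ‖z‖ = 1})
    (hmaps : ∀ ζ : ℂ, ‖ζ‖ = 1 → ‖φ ζ‖ = 1)
    (hclose : ∀ ζ : ℂ, ‖ζ‖ = 1 → dS1 (φ ζ) ζ ≤ ε)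
    (hbar : avgMap φ 0 = 0) :
    ∀ w : ℂ, ‖w‖ ≤ 1 / 2 →
      (1 - 56 * ε) * ‖w‖ ≤ ‖avgMap φ w‖ := by
  intro w hw
  have hsphere : sphere (0 : ℂ) 1 = {z : ℂ | ‖z‖ = 1} := by ext; simp
  have hbound := norm_avgMap_add_le (w := w) (by linarith) (hsphere ▸ hcont)
    (fun ζ hζ => (hmaps ζ (mem_sphere_zero_iff_norm.mp hζ)).le)
    (fun ζ hζ => by
      rw [mem_sphere_zero_iff_norm] at hζ
      exact (norm_sub_le_dS1_s12 (hmaps ζ hζ) hζ).trans (hclose ζ hζ))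
    (circleAverage_eq_zero_of_avgMap_zero hbar)
  have hK : (1 + ‖w‖) * (2 + ‖w‖) / (1 - ‖w‖) ≤ 56 := by
    rw [div_le_iff₀ (by linarith)]
    nlinarith [norm_nonneg w]
  have hKε : (1 + ‖w‖) * (2 + ‖w‖) / (1 - ‖w‖) * ‖w‖ * ε ≤ 56 * ‖w‖ * ε := by
    gcongr
  have htri : ‖w‖ ≤ ‖avgMap φ w + w‖ + ‖avgMap φ w‖ := by
    simpa using norm_sub_le (avgMap φ w + w) (avgMap φ w)
  linarith
end
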